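/- arXiv:1101.4739 — 3 statements merged into one kernel-verified Lean document; each statement's English description precedes it below -/
import Mathlib

section
/- Let E be a locally finite directed graph (every vertex receives and emits only finitely many edges) and let (E,𝓛,Ē^{0,-}) be a weakly left-resolving labelled space satisfying the standing assumptions such that |r(a)| = ∞ for some a ∈ 𝒜, and such that for each v ∈ E^0 the generalized vertex [v]_l is finite for some l ≥ 1. Let 𝔄 be a C*-algebra generated by a representation {s_a, p_A} of (E,𝓛,Ē^{0,-}) with p_A ≠ 0 for every nonempty A ∈ Ē^{0,-}. Then for any v ∈ E^0 and l ≥ 1 with [v]_l finite, the closed two-sided ideal of 𝔄 generated by the projection p_{[v]_l} is a proper ideal (not equal to 𝔄). -/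
open scoped BigOperators

/-- The `n`-fold concatenation power of a word. -/
def wpow {A : Type*} (β : List A) : ℕ → List A
  | 0 => []
  | n + 1 => β ++ wpow β n

/-- A word is simple if it is not a power of a strictly shorter word. -/
def SimpleWord {A : Type*} (β : List A) : Prop :=
  β ≠ [] ∧ ¬ ∃ (δ : List A) (n : ℕ), δ ≠ [] ∧ δ.length < β.length ∧ 1 ≤ n ∧ β = wpow δ n

/-- The initial segment `x_{[1,N]}` of an infinite word. -/
def finTake {A : Type*} (x : ℕ → A) (N : ℕ) : List A := List.ofFn (fun i : Fin N => x i)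

/-- `x = β^∞`, the periodic infinite word with period `β`. -/
def isPowInf {A : Type*} (β : List A) (x : ℕ → A) : Prop :=
  ∃ h : β ≠ [], ∀ n : ℕ,
    x n = β.get ⟨n % β.length, Nat.mod_lt n (List.length_pos_iff.mpr h)⟩

/-- A labelled graph: a directed graph together with a surjective labelling of edges. -/
structure LabelledGraph (V : Type*) (Ed : Type*) (A : Type*) where
  src : Ed → V
  rng : Ed → V
  lbl : Ed → A
  lbl_surj : Function.Surjective lbl

/-- A finite path (of length ≥ 1) in a directed graph. -/
structure LabelledGraph.GPath {V Ed A : Type*} (G : LabelledGraph V Ed A) where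
  edges : List Ed
  ne : edges ≠ []
  chain : edges.Chain' (fun e f => G.rng e = G.src f)

/-- An infinite path in a directed graph. -/
structure LabelledGraph.GInfPath {V Ed A : Type*} (G : LabelledGraph V Ed A) where
  edges : ℕ → Ed
  chain : ∀ n, G.rng (edges n) = G.src (edges (n + 1))

namespace LabelledGraph

variable {V Ed A : Type*}

def GPath.src {G : LabelledGraph V Ed A} (p : G.GPath) : V := G.src (p.edges.head p.ne)

def GPath.rng {G : LabelledGraph V Ed A} (p : G.GPath) : V := G.rng (p.edges.getLast p.ne)

def GPath.label {G : LabelledGraph V Ed A} (p : G.GPath) : List A := p.edges.map G.lbl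

def GPath.len {G : LabelledGraph V Ed A} (p : G.GPath) : ℕ := p.edges.length

def GInfPath.src {G : LabelledGraph V Ed A} (q : G.GInfPath) : V := G.src (q.edges 0)

def GInfPath.label {G : LabelledGraph V Ed A} (q : G.GInfPath) : ℕ → A :=
  fun n => G.lbl (q.edges n)

variable (G : LabelledGraph V Ed A)

/-- `α ∈ 𝓛(E^{≥1})`: `α` is the label of some finite path. -/
def IsLabelled (α : List A) : Prop := ∃ p : G.GPath, p.label = α

/-- `s(α)`, the set of sources of paths labelled `α`. -/
def srcSet (α : List A) : Set V := { v | ∃ p : G.GPath, p.label = α ∧ p.src = v }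

/-- `r(α)`, the set of ranges of paths labelled `α`. -/
def rngSet (α : List A) : Set V := { v | ∃ p : G.GPath, p.label = α ∧ p.rng = v }

/-- The relative range `r(S,α)` of `α` with respect to `S`. -/
def relRange (S : Set V) (α : List A) : Set V :=
  { v | ∃ p : G.GPath, p.label = α ∧ p.src ∈ S ∧ p.rng = v }

/-- `x ∈ 𝓛(E^∞)`: the infinite word `x` is the label of some infinite path. -/
def IsInfLabelled (x : ℕ → A) : Prop := ∃ q : G.GInfPath, q.label = x

/-- `s(x)` for an infinite labelled path `x`. -/
def infSrc (x : ℕ → A) : Set V := { v | ∃ q : G.GInfPath, q.label = x ∧ q.src = v }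

/-- `𝓛(SE^1)`: labels of edges with source in `S`. -/
def labelsFrom (S : Set V) : Set A := { a | ∃ e : Ed, G.src e ∈ S ∧ G.lbl e = a }

/-- `𝓛(E^1S)`: labels of edges with range in `S`. -/
def labelsInto (S : Set V) : Set A := { a | ∃ e : Ed, G.rng e ∈ S ∧ G.lbl e = a }

/-- `𝓛(SE^n)`: labels of paths of length `n` with source in `S`. -/
def nLabelsFrom (S : Set V) (n : ℕ) : Set (List A) :=
  { α | ∃ p : G.GPath, p.label = α ∧ p.src ∈ S ∧ p.len = n }

/-- `𝓛(E^{≤l}v)`: labels of paths of length at most `l` with range `v`. -/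
def labelsToVtx (l : ℕ) (v : V) : Set (List A) :=
  { α | ∃ p : G.GPath, p.label = α ∧ p.len ≤ l ∧ p.rng = v }

/-- The generalized vertex `[v]_l`. -/
def genVertex (l : ℕ) (v : V) : Set V := { w | G.labelsToVtx l w = G.labelsToVtx l v }

/-- `Ē^{0,-}`: the collection of all finite unions of generalized vertices. -/
def barE : Set (Set V) :=
  { S | ∃ (l : ℕ) (F : Finset V), 1 ≤ l ∧ S = ⋃ v ∈ F, G.genVertex l v }

/-- An accommodating set for `(E,𝓛)`. -/
structure Accommodating (B : Set (Set V)) : Prop where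
  empty_mem : ∅ ∈ B
  relRange_mem : ∀ S ∈ B, ∀ α : List A, G.IsLabelled α → G.relRange S α ∈ B
  inter_mem : ∀ S ∈ B, ∀ T ∈ B, S ∩ T ∈ B
  union_mem : ∀ S ∈ B, ∀ T ∈ B, S ∪ T ∈ B
  rng_mem : ∀ α : List A, G.IsLabelled α → G.rngSet α ∈ B

/-- `𝓔^{0,-}`: the smallest accommodating set for `(E,𝓛)`. -/
def smallestAcc : Set (Set V) :=
  { S | ∀ B : Set (Set V), G.Accommodating B → S ∈ B }

/-- The labelled space `(E,𝓛,B)` is weakly left-resolving. -/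
def WeaklyLeftResolving (B : Set (Set V)) : Prop :=
  ∀ S ∈ B, ∀ T ∈ B, ∀ α : List A, G.IsLabelled α →
    G.relRange S α ∩ G.relRange T α = G.relRange (S ∩ T) α

/-- Standing assumptions: no sinks, set-finite, receiver set-finite, and
edges are determined by source, range and label. -/
structure StandingAssumptions (B : Set (Set V)) : Prop where
  no_sinks : ∀ v : V, ∃ e : Ed, G.src e = v
  set_finite : ∀ S ∈ B, (G.labelsFrom S).Finite
  receiver_set_finite : ∀ S ∈ B, (G.labelsInto S).Finite
  edge_eq : ∀ e f : Ed, G.src e = G.src f → G.rng e = G.rng f → G.lbl e = G.lbl f → e = f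

/-- `(E,𝓛,B)` is strongly cofinal. -/
def StronglyCofinal : Prop :=
  ∀ x : ℕ → A, G.IsInfLabelled x → ∀ l : ℕ, 1 ≤ l → ∀ v : V, ∀ w ∈ G.infSrc x,
    ∃ N : ℕ, 1 ≤ N ∧ ∃ (m : ℕ) (lds : Fin m → List A),
      (∀ i, G.IsLabelled (lds i)) ∧
      G.relRange (G.genVertex 1 w) (finTake x N) ⊆ ⋃ i, G.relRange (G.genVertex l v) (lds i)

/-- `(E,𝓛,B)` is `l`-cofinal. -/
def LCofinal (l : ℕ) : Prop :=
  ∀ x : ℕ → A, G.IsInfLabelled x → ∀ v : V, ∀ w ∈ G.infSrc x,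
    ∃ d : ℕ, l ≤ d ∧ ∃ N : ℕ, 1 ≤ N ∧ ∃ (m : ℕ) (lds : Fin m → List A),
      (∀ i, G.IsLabelled (lds i)) ∧
      G.relRange (G.genVertex d w) (finTake x N) ⊆ ⋃ i, G.relRange (G.genVertex l v) (lds i)

/-- `(E,𝓛,B)` is cofinal: `l`-cofinal for all `l ≥ L`, for some `L > 0`. -/
def Cofinal : Prop := ∃ L : ℕ, 0 < L ∧ ∀ l : ℕ, L ≤ l → G.LCofinal l

/-- `α` is agreeable for `[v]_l` (the condition only involves `l`):
`α = βα' = α'γ` with `|β| = |γ| ≤ l`. -/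
def Agreeable (l : ℕ) (α : List A) : Prop :=
  ∃ β α' γ : List A, G.IsLabelled β ∧ G.IsLabelled α' ∧ G.IsLabelled γ ∧
    β.length = γ.length ∧ β.length ≤ l ∧ α = β ++ α' ∧ α = α' ++ γ

/-- `α` (a labelled path with `s(α) ∩ [v]_l ≠ ∅`) is disagreeable for `[v]_l`. -/
def DisagreeablePath (l : ℕ) (v : V) (α : List A) : Prop :=
  G.IsLabelled α ∧ (G.srcSet α ∩ G.genVertex l v).Nonempty ∧ ¬ G.Agreeable l α

/-- The generalized vertex `[v]_l` is disagreeable. -/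
def DisagreeableVtx (l : ℕ) (v : V) : Prop :=
  ∃ N : ℕ, 0 < N ∧ ∀ n : ℕ, N < n →
    ∃ α : List A, n ≤ α.length ∧ G.DisagreeablePath l v α

/-- The labelled space is disagreeable. -/
def DisagreeableSpace : Prop :=
  ∀ v : V, ∃ L : ℕ, 0 < L ∧ ∀ l : ℕ, L < l → G.DisagreeableVtx l v

/-- A representation of the labelled space `(E,𝓛,B)` in a C*-algebra `𝔄`. -/
structure Rep (B : Set (Set V)) (𝔄 : Type*) [NonUnitalCStarAlgebra 𝔄] where
  p : Set V → 𝔄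
  s : A → 𝔄
  p_empty : p ∅ = 0
  p_proj : ∀ S ∈ B, star (p S) = p S ∧ p S * p S = p S
  s_pisom : ∀ a : A, s a * star (s a) * s a = s a
  p_inter : ∀ S ∈ B, ∀ T ∈ B, p (S ∩ T) = p S * p T
  p_union : ∀ S ∈ B, ∀ T ∈ B, p (S ∪ T) = p S + p T - p (S ∩ T)
  p_s : ∀ S ∈ B, ∀ a : A, p S * s a = s a * p (G.relRange S [a])
  s_star_s : ∀ a : A, star (s a) * s a = p (G.rngSet [a])
  s_orth : ∀ a b : A, a ≠ b → star (s a) * s b = 0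
  p_sum : ∀ S ∈ B, ∀ h : (G.labelsFrom S).Finite, (G.labelsFrom S).Nonempty →
    p S = ∑ a ∈ h.toFinset, s a * p (G.relRange S [a]) * star (s a)

variable {G}

/-- `s_α = s_{α_1} ⋯ s_{α_n}` for a word `α`. -/
def Rep.sWord {B : Set (Set V)} {𝔄 : Type*} [NonUnitalCStarAlgebra 𝔄]
    (ρ : G.Rep B 𝔄) : List A → 𝔄
  | [] => 0
  | a :: rest => rest.foldl (fun x b => x * ρ.s b) (ρ.s a)

/-- The C*-algebra `𝔄` is generated by the representation `ρ`. -/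
def Rep.Generates {B : Set (Set V)} {𝔄 : Type*} [NonUnitalCStarAlgebra 𝔄]
    (ρ : G.Rep B 𝔄) : Prop :=
  closure (↑(NonUnitalStarAlgebra.adjoin ℂ
    (Set.range ρ.s ∪ ρ.p '' B)) : Set 𝔄) = Set.univ

/-- The representation `ρ` is universal. -/
def Rep.Universal {B : Set (Set V)} {𝔄 : Type*} [NonUnitalCStarAlgebra 𝔄]
    (ρ : G.Rep B 𝔄) : Prop :=
  ∀ (C : Type*) [NonUnitalCStarAlgebra C], ∀ ρ' : G.Rep B C,
    ∃ φ : 𝔄 →⋆ₙₐ[ℂ] C, (∀ a : A, φ (ρ.s a) = ρ'.s a) ∧ ∀ S ∈ B, φ (ρ.p S) = ρ'.p S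

end LabelledGraph

/-- A C*-algebra is simple if its only closed two-sided ideals are `{0}` and the
whole algebra. -/
def IsSimpleCStarAlgebra (𝔄 : Type*) [NonUnitalCStarAlgebra 𝔄] : Prop :=
  ∀ I : TwoSidedIdeal 𝔄, IsClosed (I : Set 𝔄) →
    (I : Set 𝔄) = {0} ∨ (I : Set 𝔄) = Set.univ

/-!
Put `K = [v]_l` and `R = r(a)` with `R` infinite, and say that `z` is annihilated beyond `k` if
`p_C z = 0` for every `C ∈ Ē^{0,-}` avoiding the vertices from which a path of length `≤ k` leads
to a vertex reached from `K` by a path of length `≤ k`. By local finiteness these vicinities are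
finite, and since every vertex has a finite generalized vertex, beyond every `k` the infinite set
`R` contains a nonempty `C ∈ Ē^{0,-}`; as `p_C p_R = p_C ≠ 0`, the projection `p_R` stays at
distance `≥ 1` from all annihilated elements. On the other hand, the span of the elements
`s_β p_C y` with `C` near `K` is stable under left multiplication by the generators and their
adjoints, consists of annihilated elements, and contains `p_K`; by density, `x p_K` lies in the
closure `J` of the annihilated elements for every `x ∈ 𝔄`. So `{z | 𝔄 z ⊆ J}` is a closed ideal
containing `p_K` but not `p_R`.
-/

open LabelledGraph Set

lemma mul_mem_span_of_forall_mul_mem {R A : Type*} [CommSemiring R] [NonUnitalNonAssocSemiring A]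
    [Module R A] [SMulCommClass R A A] {D : Set A} {g : A}
    (hg : ∀ z ∈ D, g * z ∈ Submodule.span R D) {z : A} (hz : z ∈ Submodule.span R D) :
    g * z ∈ Submodule.span R D :=
  (Submodule.span_le (p := (Submodule.span R D).comap (LinearMap.mulLeft R g))).mpr hg hz

lemma one_le_norm_sub_of_mul_eq {R : Type*} [NonUnitalNormedRing R] {q b z : R} (hq : q ≠ 0)
    (hqb : q * b = q) (hqz : q * z = 0) : 1 ≤ ‖b - z‖ := by
  have h : ‖q‖ * 1 ≤ ‖q‖ * ‖b - z‖ := calc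
    ‖q‖ * 1 = ‖q * (b - z)‖ := by rw [mul_one, mul_sub, hqb, hqz, sub_zero]
    _ ≤ ‖q‖ * ‖b - z‖ := norm_mul_le _ _
  exact le_of_mul_le_mul_left h (norm_pos_iff.mpr hq)

/-- The ideal is `{z | R z ⊆ closure N}`, two-sided because `N` is a right ideal. -/
lemma exists_closed_twoSidedIdeal_of_mul_mem_closure {R : Type*} [NonUnitalRing R]
    [TopologicalSpace R] [IsTopologicalRing R] (N : AddSubgroup R)
    (hN : ∀ z ∈ N, ∀ y, z * y ∈ N) {p b : R} (hp : ∀ x, x * p ∈ closure (N : Set R))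
    (hb : IsIdempotentElem b) (hbN : b ∉ closure (N : Set R)) :
    ∃ I : TwoSidedIdeal R, IsClosed (I : Set R) ∧ p ∈ I ∧ (I : Set R) ≠ univ := by
  have hclosure : ∀ {z}, z ∈ closure (N : Set R) → ∀ y, z * y ∈ closure (N : Set R) :=
    fun hz y => map_mem_closure (f := (· * y)) (continuous_mul_const y) hz fun z hz => hN z hz y
  have hNbar : closure (N : Set R) = N.topologicalClosure := rfl
  refine ⟨TwoSidedIdeal.mk' {z | ∀ x, x * z ∈ closure (N : Set R)}
      (fun _ => by rw [mul_zero]; exact subset_closure N.zero_mem)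
      (fun hz hw x => by rw [mul_add, hNbar]; exact add_mem (hz x) (hw x))
      (fun hz x => by rw [mul_neg, hNbar]; exact neg_mem (hz x))
      (fun hz x => by rw [← mul_assoc]; exact hz _)
      (fun hz x => by rw [← mul_assoc]; exact hclosure (hz x) _),
    ?_, (TwoSidedIdeal.mem_mk' ..).mpr hp, ?_⟩
  · rw [TwoSidedIdeal.coe_mk', ofPred_forall]
    exact isClosed_iInter fun x => isClosed_closure.preimage (continuous_const_mul x)
  · rw [TwoSidedIdeal.coe_mk']
    refine fun h => hbN ?_
    rw [← hb.eq]
    exact (h ▸ mem_univ b : b ∈ {z | ∀ x, x * z ∈ closure (N : Set R)}) b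

section EdgeBall

variable {V Ed : Type*} (s t : Ed → V)

/-- With `(s, t) = (src, rng)` this is the forward `n`-ball around `S`, with `(rng, src)` the
backward one. -/
def edgeBall (S : Set V) : ℕ → Set V
  | 0 => S
  | n + 1 => edgeBall S n ∪ t '' (s ⁻¹' edgeBall S n)

variable {s t}

lemma edgeBall_mono_radius (S : Set V) : Monotone (edgeBall s t S) :=
  monotone_nat_of_le_succ fun _ => subset_union_left

lemma edgeBall_mono {S S' : Set V} (h : S ⊆ S') : ∀ n, edgeBall s t S n ⊆ edgeBall s t S' n
  | 0 => h
  | n + 1 => union_subset_union (edgeBall_mono h n) (image_mono (preimage_mono (edgeBall_mono h n)))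

lemma target_mem_edgeBall_succ {S : Set V} {n : ℕ} {e : Ed} (h : s e ∈ edgeBall s t S n) :
    t e ∈ edgeBall s t S (n + 1) :=
  Or.inr ⟨e, h, rfl⟩

lemma Set.Finite.edgeBall (hs : ∀ v : V, {e : Ed | s e = v}.Finite) {S : Set V} (hS : S.Finite) :
    ∀ n, (edgeBall s t S n).Finite
  | 0 => hS
  | n + 1 => (hS.edgeBall hs n).union (((hS.edgeBall hs n).preimage' fun v _ => hs v).image t)

end EdgeBall

namespace LabelledGraph

variable {V Ed A : Type*} (G : LabelledGraph V Ed A)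

/-- `r(S, β)` computed one letter at a time; unlike `relRange`, it is `S` at the empty word. -/
def relRangeIter (S : Set V) : List A → Set V
  | [] => S
  | b :: β => relRangeIter (G.relRange S [b]) β

def vicinity (K : Set V) (k : ℕ) : Set V :=
  edgeBall G.rng G.src (edgeBall G.src G.rng K k) k

variable {G}

lemma isLabelled_singleton (a : A) : G.IsLabelled [a] := by
  obtain ⟨e, rfl⟩ := G.lbl_surj a
  exact ⟨⟨[e], List.cons_ne_nil e [], List.isChain_singleton e⟩, rfl⟩

lemma exists_edge_of_mem_relRange_singleton {S : Set V} {b : A} {u : V}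
    (hu : u ∈ G.relRange S [b]) : ∃ e, G.src e ∈ S ∧ G.rng e = u := by
  obtain ⟨⟨es, ne, _⟩, hlabel, hsrc, hrng⟩ := hu
  obtain ⟨e, rfl, -⟩ := List.map_eq_singleton_iff.mp hlabel
  exact ⟨e, hsrc, hrng⟩

lemma relRangeIter_subset_edgeBall {K S : Set V} {k : ℕ} (hS : S ⊆ edgeBall G.src G.rng K k)
    (β : List A) : G.relRangeIter S β ⊆ edgeBall G.src G.rng K (k + β.length) := by
  induction β generalizing S k with
  | nil => exact hS
  | cons b β ih =>
    have hstep : G.relRange S [b] ⊆ edgeBall G.src G.rng K (k + 1) := by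
      intro u hu
      obtain ⟨e, he, rfl⟩ := exists_edge_of_mem_relRange_singleton hu
      exact target_mem_edgeBall_succ (hS he)
    simpa [relRangeIter, Nat.add_assoc, Nat.add_comm 1] using ih hstep

lemma exists_mem_edgeBall_of_mem_relRangeIter {C F : Set V} {β : List A} {u : V}
    (hu : u ∈ G.relRangeIter C β) (huF : u ∈ F) :
    ∃ w ∈ C, w ∈ edgeBall G.rng G.src F β.length := by
  induction β generalizing C with
  | nil => exact ⟨u, hu, huF⟩
  | cons b β ih =>
    obtain ⟨w, hw, hwF⟩ := ih hu
    obtain ⟨e, he, rfl⟩ := exists_edge_of_mem_relRange_singleton hw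
    exact ⟨G.src e, he, target_mem_edgeBall_succ hwF⟩

lemma vicinity_mono (K : Set V) : Monotone (G.vicinity K) := fun _ _ h =>
  (edgeBall_mono (edgeBall_mono_radius K h) _).trans (edgeBall_mono_radius _ h)

lemma _root_.Set.Finite.vicinity
    (hloc : ∀ v : V, {e : Ed | G.src e = v}.Finite ∧ {e : Ed | G.rng e = v}.Finite)
    {K : Set V} (hK : K.Finite) (k : ℕ) : (G.vicinity K k).Finite :=
  (hK.edgeBall (fun v => (hloc v).1) k).edgeBall (fun v => (hloc v).2) k

lemma Accommodating.relRange_singleton_mem {B : Set (Set V)} (hB : G.Accommodating B)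
    {S : Set V} (hS : S ∈ B) (b : A) : G.relRange S [b] ∈ B :=
  hB.relRange_mem S hS [b] (isLabelled_singleton b)

lemma Accommodating.relRangeIter_mem {B : Set (Set V)} (hB : G.Accommodating B)
    {S : Set V} (hS : S ∈ B) (β : List A) : G.relRangeIter S β ∈ B := by
  induction β generalizing S with
  | nil => exact hS
  | cons b β ih => exact ih (hB.relRange_singleton_mem hS b)

lemma genVertex_mem_barE {l : ℕ} (hl : 1 ≤ l) (v : V) : G.genVertex l v ∈ G.barE :=
  ⟨l, {v}, hl, by simp⟩

lemma mem_genVertex_self (l : ℕ) (v : V) : v ∈ G.genVertex l v := rfl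

lemma mem_genVertex_comm {l : ℕ} {u w : V} (h : u ∈ G.genVertex l w) : w ∈ G.genVertex l u :=
  Eq.symm h

lemma labelsToVtx_eq_of_le {l L : ℕ} (hlL : l ≤ L) (u : V) :
    G.labelsToVtx l u = G.labelsToVtx L u ∩ {α | α.length ≤ l} := by
  ext α
  constructor
  · rintro ⟨p, rfl, hlen, hrng⟩
    exact ⟨⟨p, rfl, hlen.trans hlL, hrng⟩, by simpa [GPath.label, GPath.len] using hlen⟩
  · rintro ⟨⟨p, rfl, -, hrng⟩, hlen⟩
    exact ⟨p, rfl, by simpa [GPath.label, GPath.len] using hlen, hrng⟩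

lemma genVertex_anti {l L : ℕ} (hlL : l ≤ L) (w : V) : G.genVertex L w ⊆ G.genVertex l w := by
  intro u (hu : G.labelsToVtx L u = G.labelsToVtx L w)
  show G.labelsToVtx l u = G.labelsToVtx l w
  rw [labelsToVtx_eq_of_le hlL, labelsToVtx_eq_of_le hlL w, hu]

/-- Intersect `R` with a generalized vertex `[w]_L` for `w ∈ R` so far out that `w` lies in none
of the finite generalized vertices `[u]_{l_u}`, `u ∈ W`; then `[w]_L ⊆ [w]_{l_u}` misses `u`. -/
lemma exists_nonempty_barE_subset_disjoint (hacc : G.Accommodating G.barE)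
    (hfin : ∀ v : V, ∃ l : ℕ, (G.genVertex l v).Finite)
    {R : Set V} (hR : R ∈ G.barE) (hRinf : R.Infinite) {W : Set V} (hW : W.Finite) :
    ∃ C ∈ G.barE, C.Nonempty ∧ C ⊆ R ∧ Disjoint C W := by
  choose lev hlevfin using hfin
  obtain ⟨w, hwR, hwW⟩ :=
    (hRinf.sdiff (hW.biUnion fun u _ => hlevfin u)).nonempty
  set L := max 1 (hW.toFinset.sup lev)
  refine ⟨G.genVertex L w ∩ R, hacc.inter_mem _ (genVertex_mem_barE (le_max_left _ _) w) _ hR,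
    ⟨w, mem_genVertex_self L w, hwR⟩, inter_subset_right, ?_⟩
  refine disjoint_left.mpr fun u ⟨huw, _⟩ huW => hwW (mem_biUnion huW ?_)
  have hlu : lev u ≤ L := le_max_of_le_right (Finset.le_sup (hW.mem_toFinset.mpr huW))
  exact mem_genVertex_comm (genVertex_anti hlu w huw)

namespace Rep

variable {B : Set (Set V)} {𝔄 : Type*} [NonUnitalCStarAlgebra 𝔄] (ρ : G.Rep B 𝔄)

/-- `s_β x`; unlike `sWord`, it is meaningful at the empty word. -/
def sWordMul : List A → 𝔄 → 𝔄
  | [], x => x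
  | b :: β, x => ρ.s b * sWordMul β x

lemma sWordMul_zero (β : List A) : ρ.sWordMul β 0 = 0 := by
  induction β with
  | nil => rfl
  | cons b β ih => rw [sWordMul, ih, mul_zero]

variable {ρ}

lemma p_mul_sWordMul (hB : G.Accommodating B) {S : Set V} (hS : S ∈ B) (β : List A) (x : 𝔄) :
    ρ.p S * ρ.sWordMul β x = ρ.sWordMul β (ρ.p (G.relRangeIter S β) * x) := by
  induction β generalizing S with
  | nil => rfl
  | cons b β ih =>
    rw [sWordMul, ← mul_assoc, ρ.p_s S hS b, mul_assoc, ih (hB.relRange_singleton_mem hS b)]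
    rfl

lemma star_s_mul_p (hB : G.Accommodating B) {S : Set V} (hS : S ∈ B) (c : A) :
    star (ρ.s c) * ρ.p S = ρ.p (G.relRange S [c]) * star (ρ.s c) := by
  have h := congrArg star (ρ.p_s S hS c)
  rwa [star_mul, star_mul, (ρ.p_proj S hS).1,
    (ρ.p_proj _ (hB.relRange_singleton_mem hS c)).1] at h

variable (ρ)

def nearMonomials (K : Set V) : Set 𝔄 :=
  {z | ∃ (β : List A) (C : Set V) (y : 𝔄) (k : ℕ),
    C ∈ B ∧ C ⊆ edgeBall G.src G.rng K k ∧ z = ρ.sWordMul β (ρ.p C * y)}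

def annihilatedBeyond (K : Set V) (k : ℕ) : Submodule ℂ 𝔄 where
  carrier := {z | ∀ C ∈ B, Disjoint C (G.vicinity K k) → ρ.p C * z = 0}
  add_mem' hz hw C hC hd := by rw [mul_add, hz C hC hd, hw C hC hd, add_zero]
  zero_mem' _ _ _ := mul_zero _
  smul_mem' c z hz C hC hd := by rw [mul_smul_comm, hz C hC hd, smul_zero]

variable {ρ}

lemma annihilatedBeyond_mono (K : Set V) : Monotone (ρ.annihilatedBeyond K) :=
  fun _ _ hkk' _ hz C hC hd => hz C hC (hd.mono_right (G.vicinity_mono K hkk'))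

lemma mem_iSup_annihilatedBeyond {K : Set V} {z : 𝔄} :
    z ∈ ⨆ k, ρ.annihilatedBeyond K k ↔ ∃ k, z ∈ ρ.annihilatedBeyond K k :=
  Submodule.mem_iSup_of_directed _ (annihilatedBeyond_mono (ρ := ρ) K).directed_le

lemma mul_mem_iSup_annihilatedBeyond {K : Set V} {z : 𝔄}
    (hz : z ∈ ⨆ k, ρ.annihilatedBeyond K k) (y : 𝔄) : z * y ∈ ⨆ k, ρ.annihilatedBeyond K k := by
  obtain ⟨k, hk⟩ := mem_iSup_annihilatedBeyond.mp hz
  refine mem_iSup_annihilatedBeyond.mpr ⟨k, fun C hC hd => ?_⟩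
  rw [← mul_assoc, hk C hC hd, zero_mul]

lemma nearMonomials_subset_iSup_annihilatedBeyond (hB : G.Accommodating B) (K : Set V) :
    ρ.nearMonomials K ⊆ ↑(⨆ k, ρ.annihilatedBeyond K k) := by
  rintro _ ⟨β, D, y, k, hD, hDK, rfl⟩
  refine mem_iSup_annihilatedBeyond.mpr ⟨max k β.length, fun C hC hd => ?_⟩
  have hempty : G.relRangeIter C β ∩ D = ∅ := by
    refine eq_empty_of_forall_notMem fun u ⟨huC, huD⟩ => ?_
    obtain ⟨w, hwC, hw⟩ := exists_mem_edgeBall_of_mem_relRangeIter huC (hDK huD)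
    refine disjoint_left.mp hd hwC ?_
    exact edgeBall_mono_radius _ (le_max_right k _)
      (edgeBall_mono (edgeBall_mono_radius K (le_max_left k _)) _ hw)
  rw [p_mul_sWordMul hB hC, ← mul_assoc, ← ρ.p_inter _ (hB.relRangeIter_mem hC β) _ hD, hempty,
    ρ.p_empty, zero_mul, sWordMul_zero]

lemma p_mul_mem_nearMonomials (hB : G.Accommodating B) {K S : Set V} (hS : S ∈ B) {z : 𝔄}
    (hz : z ∈ ρ.nearMonomials K) : ρ.p S * z ∈ ρ.nearMonomials K := by
  obtain ⟨β, D, y, k, hD, hDK, rfl⟩ := hz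
  refine ⟨β, G.relRangeIter S β ∩ D, y, k, hB.inter_mem _ (hB.relRangeIter_mem hS β) _ hD,
    inter_subset_right.trans hDK, ?_⟩
  rw [p_mul_sWordMul hB hS, ← mul_assoc, ← ρ.p_inter _ (hB.relRangeIter_mem hS β) _ hD]

lemma s_mul_mem_nearMonomials {K : Set V} (c : A) {z : 𝔄} (hz : z ∈ ρ.nearMonomials K) :
    ρ.s c * z ∈ ρ.nearMonomials K := by
  obtain ⟨β, D, y, k, hD, hDK, rfl⟩ := hz
  exact ⟨c :: β, D, y, k, hD, hDK, rfl⟩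

lemma star_s_mul_mem_span_nearMonomials (hB : G.Accommodating B) {K : Set V} (c : A) {z : 𝔄}
    (hz : z ∈ ρ.nearMonomials K) : star (ρ.s c) * z ∈ Submodule.span ℂ (ρ.nearMonomials K) := by
  obtain ⟨β, D, y, k, hD, hDK, rfl⟩ := hz
  refine Submodule.subset_span ?_
  cases β with
  | nil =>
    refine ⟨[], G.relRange D [c], star (ρ.s c) * y, k + 1, hB.relRange_singleton_mem hD c,
      relRangeIter_subset_edgeBall hDK [c], ?_⟩
    rw [sWordMul, sWordMul, ← mul_assoc, star_s_mul_p hB hD, mul_assoc]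
  | cons b β =>
    rw [sWordMul, ← mul_assoc]
    by_cases hcb : c = b
    · rw [← hcb, ρ.s_star_s c]
      exact p_mul_mem_nearMonomials hB (hB.rng_mem [c] (isLabelled_singleton c))
        ⟨β, D, y, k, hD, hDK, rfl⟩
    · rw [ρ.s_orth c b hcb, zero_mul]
      exact ⟨[], ∅, 0, 0, hB.empty_mem, empty_subset _, by rw [ρ.p_empty, zero_mul]; rfl⟩

lemma mul_mem_span_nearMonomials (hB : G.Accommodating B) {K : Set V} {x : 𝔄}
    (hx : x ∈ NonUnitalStarAlgebra.adjoin ℂ (range ρ.s ∪ ρ.p '' B)) {z : 𝔄}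
    (hz : z ∈ Submodule.span ℂ (ρ.nearMonomials K)) :
    x * z ∈ Submodule.span ℂ (ρ.nearMonomials K) := by
  replace hx : x ∈ NonUnitalAlgebra.adjoin ℂ
      ((range ρ.s ∪ ρ.p '' B) ∪ star (range ρ.s ∪ ρ.p '' B)) := hx
  induction hx using NonUnitalAlgebra.adjoin_induction generalizing z with
  | mem x hgen =>
    refine mul_mem_span_of_forall_mul_mem (fun z hz => ?_) hz
    rcases hgen with (⟨c, rfl⟩ | ⟨S, hS, rfl⟩) | hstar
    · exact Submodule.subset_span (s_mul_mem_nearMonomials c hz)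
    · exact Submodule.subset_span (p_mul_mem_nearMonomials hB hS hz)
    · rcases mem_star.mp hstar with ⟨c, hc⟩ | ⟨S, hS, hSx⟩
      · rw [← star_star x, ← hc]
        exact star_s_mul_mem_span_nearMonomials hB c hz
      · rw [← star_star x, ← hSx, (ρ.p_proj S hS).1]
        exact Submodule.subset_span (p_mul_mem_nearMonomials hB hS hz)
  | add x y _ _ hx hy => rw [add_mul]; exact add_mem (hx hz) (hy hz)
  | zero => rw [zero_mul]; exact zero_mem _
  | mul x y _ _ hx hy => rw [mul_assoc]; exact hx (hy hz)
  | smul c x _ hx => rw [smul_mul_assoc]; exact Submodule.smul_mem _ c (hx hz)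

lemma mul_p_mem_closure_span_nearMonomials (hB : G.Accommodating B) (hgen : ρ.Generates)
    {K : Set V} (hK : K ∈ B) (x : 𝔄) :
    x * ρ.p K ∈ closure (Submodule.span ℂ (ρ.nearMonomials K) : Set 𝔄) := by
  have hpK : ρ.p K ∈ ρ.nearMonomials K :=
    ⟨[], K, ρ.p K, 0, hK, subset_rfl, by rw [sWordMul, (ρ.p_proj K hK).2]⟩
  exact map_mem_closure (f := (· * ρ.p K)) (continuous_mul_const _) (hgen ▸ mem_univ x)
    fun y hy => mul_mem_span_nearMonomials hB hy (Submodule.subset_span hpK)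

lemma p_notMem_closure_iSup_annihilatedBeyond (hnz : ∀ S ∈ B, S.Nonempty → ρ.p S ≠ 0)
    {K R : Set V} (hR : R ∈ B)
    (hfar : ∀ k, ∃ C ∈ B, C.Nonempty ∧ C ⊆ R ∧ Disjoint C (G.vicinity K k)) :
    ρ.p R ∉ closure (↑(⨆ k, ρ.annihilatedBeyond K k) : Set 𝔄) := by
  have hdist : ∀ z ∈ (↑(⨆ k, ρ.annihilatedBeyond K k) : Set 𝔄), 1 ≤ ‖ρ.p R - z‖ := by
    intro z hz
    obtain ⟨k, hk⟩ := mem_iSup_annihilatedBeyond.mp hz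
    obtain ⟨C, hC, hCne, hCR, hd⟩ := hfar k
    refine one_le_norm_sub_of_mul_eq (hnz C hC hCne) ?_ (hk C hC hd)
    rw [← ρ.p_inter C hC R hR, inter_eq_left.mpr hCR]
  intro hmem
  have h : 1 ≤ ‖ρ.p R - ρ.p R‖ := closure_minimal hdist
    (isClosed_le continuous_const (continuous_const.sub continuous_id).norm) hmem
  norm_num at h

end Rep

end LabelledGraph

theorem ideal_of_finite_genVertex_proper_general
    {V Ed A : Type*} (G : LabelledGraph V Ed A)
    (hloc : ∀ v : V, {e : Ed | G.src e = v}.Finite ∧ {e : Ed | G.rng e = v}.Finite)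
    (hacc : G.Accommodating G.barE)
    (hinf : ∃ a : A, (G.rngSet [a]).Infinite)
    (hfin : ∀ v : V, ∃ l : ℕ, 1 ≤ l ∧ (G.genVertex l v).Finite)
    (𝔄 : Type*) [NonUnitalCStarAlgebra 𝔄]
    (ρ : G.Rep G.barE 𝔄) (hgen : ρ.Generates)
    (hnz : ∀ S ∈ G.barE, S.Nonempty → ρ.p S ≠ 0)
    (v : V) (l : ℕ) (hl : 1 ≤ l) (hvl : (G.genVertex l v).Finite) :
    ∃ I : TwoSidedIdeal 𝔄, IsClosed (I : Set 𝔄) ∧ ρ.p (G.genVertex l v) ∈ I ∧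
      (I : Set 𝔄) ≠ Set.univ := by
  obtain ⟨a, ha⟩ := hinf
  have hK : G.genVertex l v ∈ G.barE := genVertex_mem_barE hl v
  have hR : G.rngSet [a] ∈ G.barE := hacc.rng_mem [a] (isLabelled_singleton a)
  have hfin' : ∀ u, ∃ l, (G.genVertex l u).Finite := fun u => (hfin u).imp fun _ => And.right
  refine exists_closed_twoSidedIdeal_of_mul_mem_closure
    (⨆ k, ρ.annihilatedBeyond (G.genVertex l v) k).toAddSubgroup
    (fun z hz y => Rep.mul_mem_iSup_annihilatedBeyond hz y)
    (fun x => closure_mono ?_ (Rep.mul_p_mem_closure_span_nearMonomials hacc hgen hK x))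
    (ρ.p_proj _ hR).2 ?_
  · exact Submodule.span_le.mpr (Rep.nearMonomials_subset_iSup_annihilatedBeyond hacc _)
  · exact Rep.p_notMem_closure_iSup_annihilatedBeyond hnz hR fun k =>
      exists_nonempty_barE_subset_disjoint hacc hfin' hR ha (hvl.vicinity hloc k)

/-- For a locally finite graph with `|r(a)| = ∞` for some label `a`
and all generalized vertices eventually finite, the closed two-sided ideal
generated by the projection `p_{[v]_l}` of a finite generalized vertex is proper. -/
theorem ideal_of_finite_genVertex_proper
    {V Ed A : Type*} [Countable A] (G : LabelledGraph V Ed A)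
    (hloc : ∀ v : V, {e : Ed | G.src e = v}.Finite ∧ {e : Ed | G.rng e = v}.Finite)
    (hacc : G.Accommodating G.barE)
    (hwlr : G.WeaklyLeftResolving G.barE)
    (hsa : G.StandingAssumptions G.barE)
    (hinf : ∃ a : A, (G.rngSet [a]).Infinite)
    (hfin : ∀ v : V, ∃ l : ℕ, 1 ≤ l ∧ (G.genVertex l v).Finite)
    (𝔄 : Type*) [NonUnitalCStarAlgebra 𝔄]
    (ρ : G.Rep G.barE 𝔄) (hgen : ρ.Generates)
    (hnz : ∀ S ∈ G.barE, S.Nonempty → ρ.p S ≠ 0)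
    (v : V) (l : ℕ) (hl : 1 ≤ l) (hvl : (G.genVertex l v).Finite) :
    ∃ I : TwoSidedIdeal 𝔄, IsClosed (I : Set 𝔄) ∧ ρ.p (G.genVertex l v) ∈ I ∧
      (I : Set 𝔄) ≠ Set.univ :=
  ideal_of_finite_genVertex_proper_general G hloc hacc hinf hfin 𝔄 ρ hgen hnz v l hl hvl
end

section
/- A labelled space (E,𝓛,𝓑) is cofinal if and only if it is l-cofinal for all l ≥ 1. -/
open scoped BigOperators

namespace LabelledGraph

variable {V Ed A : Type*}

theorem GPath.label_length {G : LabelledGraph V Ed A} (p : G.GPath) : p.label.length = p.len :=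
  List.length_map _

variable (G : LabelledGraph V Ed A)

theorem labelsToVtx_eq_inter_of_le {l l' : ℕ} (h : l ≤ l') (w : V) :
    G.labelsToVtx l w = G.labelsToVtx l' w ∩ {α | α.length ≤ l} := by
  ext α
  constructor
  · rintro ⟨p, rfl, hlen, hr⟩
    exact ⟨⟨p, rfl, hlen.trans h, hr⟩, p.label_length.trans_le hlen⟩
  · rintro ⟨⟨p, rfl, -, hr⟩, hlen⟩
    exact ⟨p, rfl, p.label_length.symm.trans_le hlen, hr⟩

theorem genVertex_subset_of_le {l l' : ℕ} (h : l ≤ l') (v : V) :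
    G.genVertex l' v ⊆ G.genVertex l v := by
  intro w (hw : G.labelsToVtx l' w = G.labelsToVtx l' v)
  show G.labelsToVtx l w = G.labelsToVtx l v
  rw [G.labelsToVtx_eq_inter_of_le h w, G.labelsToVtx_eq_inter_of_le h v, hw]

theorem relRange_mono {S T : Set V} (h : S ⊆ T) (α : List A) :
    G.relRange S α ⊆ G.relRange T α := by
  rintro v ⟨p, hl, hs, hr⟩
  exact ⟨p, hl, h hs, hr⟩

variable {G}

/-- Since `[v]_{l'} ⊆ [v]_l`, the covering paths witnessing `l'`-cofinality also witness
`l`-cofinality, with the same `d ≥ l' ≥ l`. -/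
theorem LCofinal.of_le {l l' : ℕ} (h : l ≤ l') (hcof : G.LCofinal l') : G.LCofinal l := by
  intro x hx v w hw
  obtain ⟨d, hd, N, hN, m, lds, hlds, hsub⟩ := hcof x hx v w hw
  refine ⟨d, h.trans hd, N, hN, m, lds, hlds, hsub.trans ?_⟩
  exact Set.iUnion_mono fun i => G.relRange_mono (G.genVertex_subset_of_le h v) (lds i)

end LabelledGraph

theorem cofinal_iff_lCofinal_forall_general
    {V Ed A : Type*} (G : LabelledGraph V Ed A) :
    G.Cofinal ↔ ∀ l : ℕ, 1 ≤ l → G.LCofinal l := by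
  constructor
  · rintro ⟨L, -, hcof⟩ l -
    exact (hcof (max L l) (le_max_left L l)).of_le (le_max_right L l)
  · exact fun h => ⟨1, one_pos, h⟩

/-- A labelled space is cofinal iff it is `l`-cofinal for all `l ≥ 1`. -/
theorem cofinal_iff_lCofinal_forall
    {V Ed A : Type*} (G : LabelledGraph V Ed A)
    (B : Set (Set V)) (hacc : G.Accommodating B) :
    G.Cofinal ↔ ∀ l : ℕ, 1 ≤ l → G.LCofinal l :=
  cofinal_iff_lCofinal_forall_general G
end

section
/- Let (E,𝓛,𝓑) be a labelled space with E having no sinks, and let v ∈ E^0, l ≥ 1. If [v]_l is not disagreeable, then every infinite labelled path x ∈ 𝓛(E^∞) with s(x) ∩ [v]_l ≠ ∅ is of the form x = β^∞ for some simple labelled path β ∈ 𝓛(E^{≤l}). -/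
open scoped BigOperators

/-!
Every sufficiently long prefix of `x` is a labelled path whose source lies in `[v]_l`, so, `[v]_l`
not being disagreeable, it is agreeable: `α = βα' = α'γ` says exactly that `α` has period
`|β| ∈ [1, l]`. Only finitely many periods are available, so one of them is a period of
arbitrarily long prefixes, hence of `x` itself. Then `x = β^∞` for `β` the prefix of `x` whose
length is the least period of `x`, and `β` is simple, since `β = δ^n` would make `|δ|` a smaller
period.
-/

open Filter Function

section Words

variable {A : Type*}

@[simp]
lemma length_wpow (δ : List A) (n : ℕ) : (wpow δ n).length = n * δ.length := by
  induction n with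
  | zero => simp [wpow]
  | succ n ih => simp only [wpow, List.length_append, ih]; ring

lemma getElem_wpow (δ : List A) (n j : ℕ) (hj : j < (wpow δ n).length) :
    (wpow δ n)[j] = δ[j % δ.length]'(Nat.mod_lt _ (Nat.pos_of_ne_zero fun h0 => by
      simp [h0] at hj)) := by
  induction n generalizing j with
  | zero => simp [wpow] at hj
  | succ n ih =>
    simp only [wpow]
    by_cases hjδ : j < δ.length
    · rw [List.getElem_append_left hjδ]
      exact getElem_congr_idx (Nat.mod_eq_of_lt hjδ).symm
    · push Not at hjδ
      rw [List.getElem_append_right hjδ, ih]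
      exact getElem_congr_idx (Nat.mod_eq_sub_mod hjδ).symm

@[simp]
lemma length_finTake (x : ℕ → A) (N : ℕ) : (finTake x N).length = N := by simp [finTake]

@[simp]
lemma getElem_finTake (x : ℕ → A) (N j : ℕ) (hj : j < (finTake x N).length) :
    (finTake x N)[j] = x j := by
  simp [finTake]

lemma finTake_ne_nil {x : ℕ → A} {N : ℕ} (hN : N ≠ 0) : finTake x N ≠ [] :=
  List.ne_nil_of_length_pos (by simpa using Nat.pos_of_ne_zero hN)

lemma isPowInf_finTake {x : ℕ → A} {p : ℕ} (hp : 0 < p) (hx : Periodic x p) :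
    isPowInf (finTake x p) x :=
  ⟨finTake_ne_nil hp.ne', fun n => by simp [hx.map_mod_nat]⟩

lemma getElem_add_length_of_append_eq_append {w β α γ : List A} (h₁ : w = β ++ α)
    (h₂ : w = α ++ γ) (i : ℕ) (hi : i + β.length < w.length) :
    w[i + β.length] = w[i] := by
  have hiα : i < α.length := by simp [h₁] at hi; omega
  calc w[i + β.length] = (β ++ α)[i + β.length]'(by simpa [h₁] using hi) :=
        List.getElem_of_eq h₁ _
    _ = α[i] := by rw [List.getElem_append_right (by omega)]; exact getElem_congr_idx (by omega)
    _ = (α ++ γ)[i]'(by simp; omega) := (List.getElem_append_left hiα).symm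
    _ = w[i] := (List.getElem_of_eq h₂ _).symm

lemma Function.Periodic.length_of_finTake_eq_wpow {x : ℕ → A} {p k : ℕ} {δ : List A}
    (hx : Periodic x p) (hp : 0 < p) (hδ : finTake x p = wpow δ k) : Periodic x δ.length := by
  have hlen : p = k * δ.length := by simpa using congrArg List.length hδ
  have hδpos : 0 < δ.length := Nat.pos_of_mul_pos_left (hlen ▸ hp)
  have hx_eq : ∀ j, x j = δ[j % δ.length]'(Nat.mod_lt _ hδpos) := fun j => by
    rw [← hx.map_mod_nat j,
      ← getElem_finTake x p (j % p) (by simpa using Nat.mod_lt _ hp),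
      List.getElem_of_eq hδ, getElem_wpow]
    exact getElem_congr_idx (Nat.mod_mod_of_dvd _ (hlen ▸ dvd_mul_left _ _))
  intro i
  rw [hx_eq, hx_eq]
  exact getElem_congr_idx (Nat.add_mod_right _ _)

lemma simpleWord_finTake_of_minimal {x : ℕ → A} {p : ℕ} (hp : 0 < p) (hx : Periodic x p)
    (hmin : ∀ q, 0 < q → q < p → ¬ Periodic x q) : SimpleWord (finTake x p) := by
  refine ⟨finTake_ne_nil hp.ne', ?_⟩
  rintro ⟨δ, k, hδ, hδlt, -, hpow⟩
  exact hmin δ.length (List.length_pos_iff.2 hδ) (by simpa using hδlt)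
    (hx.length_of_finTake_eq_wpow hp hpow)

lemma exists_simpleWord_isPowInf_finTake {x : ℕ → A} {p : ℕ} (hp : 0 < p)
    (hx : Periodic x p) :
    ∃ q ≤ p, 0 < q ∧ SimpleWord (finTake x q) ∧ isPowInf (finTake x q) x := by
  classical
  have hex : ∃ q, 0 < q ∧ Periodic x q := ⟨p, hp, hx⟩
  obtain ⟨hq, hxq⟩ := Nat.find_spec hex
  refine ⟨Nat.find hex, Nat.find_min' hex ⟨hp, hx⟩, hq,
    simpleWord_finTake_of_minimal hq hxq fun q hq₀ hqlt hxq => ?_, isPowInf_finTake hq hxq⟩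
  exact Nat.find_min hex hqlt ⟨hq₀, hxq⟩

lemma exists_periodic_of_eventually_periodic_prefix {x : ℕ → A} {s : Finset ℕ}
    (h : ∀ᶠ m in atTop, ∃ p ∈ s, ∀ i, i + p < m → x (i + p) = x i) :
    ∃ p ∈ s, Periodic x p := by
  by_contra! hs
  have hfail : ∀ p ∈ s, ∀ᶠ m in atTop, ¬ ∀ i, i + p < m → x (i + p) = x i := by
    intro p hp
    obtain ⟨i, hi⟩ := not_forall.1 (hs p hp)
    filter_upwards [eventually_gt_atTop (i + p)] with m hm hper
    exact hi (hper i hm)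
  obtain ⟨m, ⟨p, hp, hper⟩, hnot⟩ := (h.and ((eventually_all_finset s).2 hfail)).exists
  exact hnot p hp hper

end Words

namespace LabelledGraph

variable {V Ed A : Type*} {G : LabelledGraph V Ed A}

lemma GPath.label_ne_nil (p : G.GPath) : p.label ≠ [] := by
  simpa [GPath.label] using p.ne

lemma IsLabelled.ne_nil {α : List A} (h : G.IsLabelled α) : α ≠ [] := by
  obtain ⟨p, rfl⟩ := h
  exact p.label_ne_nil

lemma GInfPath.exists_gPath_finTake (q : G.GInfPath) {m : ℕ} (hm : m ≠ 0) :
    ∃ p : G.GPath, p.label = finTake q.label m ∧ p.src = q.src := by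
  have hne : List.ofFn (fun i : Fin m => q.edges i) ≠ [] := by simpa using hm
  refine ⟨⟨List.ofFn (fun i : Fin m => q.edges i), hne, ?_⟩, ?_, ?_⟩
  · exact List.isChain_iff_getElem.2 fun i hi => by simpa using q.chain i
  · simp [GPath.label, finTake, List.map_ofFn, GInfPath.label, Function.comp_def]
  · simp [GPath.src, List.head_ofFn, GInfPath.src]

lemma Agreeable.exists_period {l : ℕ} {α : List A} (h : G.Agreeable l α) :
    ∃ p ∈ Finset.Icc 1 l, ∀ i (hi : i + p < α.length), α[i + p] = α[i] := by
  obtain ⟨β, α', γ, hβ, -, -, -, hβl, h₁, h₂⟩ := h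
  exact ⟨β.length, Finset.mem_Icc.2 ⟨List.length_pos_iff.2 hβ.ne_nil, hβl⟩,
    getElem_add_length_of_append_eq_append h₁ h₂⟩

lemma eventually_agreeable_finTake {l : ℕ} {v : V} (h : ¬ G.DisagreeableVtx l v)
    (q : G.GInfPath) (hq : q.src ∈ G.genVertex l v) :
    ∀ᶠ m in atTop, G.Agreeable l (finTake q.label m) := by
  simp only [DisagreeableVtx, not_exists, not_and, not_forall] at h
  obtain ⟨n, hn, hshort⟩ := h 1 one_pos
  filter_upwards [eventually_ge_atTop n] with m hnm
  by_contra hag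
  obtain ⟨p, hp, hsrc⟩ := q.exists_gPath_finTake (by omega : m ≠ 0)
  exact hshort _ (by simpa using hnm) ⟨⟨p, hp⟩, ⟨q.src, ⟨p, hp, hsrc⟩, hq⟩, hag⟩

lemma eventually_periodic_prefix {l : ℕ} {v : V} (h : ¬ G.DisagreeableVtx l v)
    (q : G.GInfPath) (hq : q.src ∈ G.genVertex l v) :
    ∀ᶠ m in atTop, ∃ p ∈ Finset.Icc 1 l, ∀ i, i + p < m → q.label (i + p) = q.label i := by
  filter_upwards [eventually_agreeable_finTake h q hq] with m hm
  obtain ⟨p, hp, hper⟩ := hm.exists_period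
  refine ⟨p, hp, fun i hi => ?_⟩
  have hlen : i + p < (finTake q.label m).length := by simpa using hi
  rw [← getElem_finTake _ _ _ hlen, ← getElem_finTake q.label m i (by omega)]
  exact hper i hlen

end LabelledGraph

theorem not_disagreeable_implies_infinite_periodic_general
    {V Ed A : Type*} (G : LabelledGraph V Ed A)
    (v : V) (l : ℕ)
    (h : ¬ G.DisagreeableVtx l v) :
    ∀ x : ℕ → A, G.IsInfLabelled x → (G.infSrc x ∩ G.genVertex l v).Nonempty →
      ∃ β : List A, G.IsLabelled β ∧ β.length ≤ l ∧ SimpleWord β ∧ isPowInf β x := by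
  rintro x - ⟨-, ⟨q, rfl, rfl⟩, hq⟩
  obtain ⟨p, hp, hper⟩ :=
    exists_periodic_of_eventually_periodic_prefix (LabelledGraph.eventually_periodic_prefix h q hq)
  rw [Finset.mem_Icc] at hp
  obtain ⟨k, hkp, hk, hsimple, hpow⟩ := exists_simpleWord_isPowInf_finTake hp.1 hper
  obtain ⟨path, hpath, -⟩ := q.exists_gPath_finTake hk.ne'
  exact ⟨_, ⟨path, hpath⟩, by simpa using hkp.trans hp.2, hsimple, hpow⟩

/-- If `[v]_l` is not disagreeable (and `E` has no sinks), then every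
infinite labelled path whose source meets `[v]_l` is `β^∞` for a simple labelled
path `β` of length at most `l`. -/
theorem not_disagreeable_implies_infinite_periodic
    {V Ed A : Type*} (G : LabelledGraph V Ed A)
    (B : Set (Set V)) (hacc : G.Accommodating B)
    (hns : ∀ v : V, ∃ e : Ed, G.src e = v)
    (v : V) (l : ℕ) (hl : 1 ≤ l)
    (h : ¬ G.DisagreeableVtx l v) :
    ∀ x : ℕ → A, G.IsInfLabelled x → (G.infSrc x ∩ G.genVertex l v).Nonempty →
      ∃ β : List A, G.IsLabelled β ∧ β.length ≤ l ∧ SimpleWord β ∧ isPowInf β x :=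
  not_disagreeable_implies_infinite_periodic_general G v l h
end
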